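/- Regret lower bound for full-information stochastic bandits: there exist absolute constants c > 0, d > 0, a > 0 and K₀ ∈ ℕ such that for every integer K ≥ K₀ and every integer T ≥ 1 with ε := √(c·ln K/T) satisfying ε < d and ε < 1/2, and for every deterministic full-information algorithm (f_1, …, f_T), there exists an arm j ∈ {1,…,K} such that the expected pseudo-regret under instance I_j satisfies (ε/2)·E_{P_j}[#{t ≤ T : I_t ≠ j}] ≥ a·√(T·ln K). -/

import Mathlib

/-!
Compare every instance `P_j` with the uniform measure `U` on reward matrices: `P_j` has
density `R_j = ∏_t (1 ± ε)` with respect to `U`, the sign given by the entries of row `j`.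
Whatever arm `g(ω)` a rule picks, `∑_j P_j(g ≠ j) = K - E_U[R_g] ≥ K - √(E_U ∑_j R_j²)` by
Cauchy–Schwarz, and `E_U[R_j²] = (1 + ε²)^T`. With `ε² T = (ln K)/2` this is at most `√K ≤ K/4`,
so `∑_j P_j(I_t ≠ j) ≥ K/2` in every round, for any rule whatsoever (it may even see the whole
reward matrix). Summing over the `T` rounds, some arm `j` has `E_j[#{t : I_t ≠ j}] ≥ T/2`, so
its regret is at least `εT/4 ≥ √(T ln K)/8`.
-/

open MeasureTheory

/-- The Bernoulli measure on `Bool` with success probability `p` (for `p ∈ [0,1]`). -/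
noncomputable def bern (p : ℝ) : Measure Bool :=
  (PMF.bernoulli (min (Real.toNNReal p) 1) (min_le_right _ _)).toMeasure

/-- The lower-bound instance `I_j`: the product measure on `K × T` reward matrices
under which all entries are independent, entries of row `j` are Bernoulli((1+ε)/2),
and entries of every other row are Bernoulli(1/2). -/
noncomputable def lowerP (K T : ℕ) (ε : ℝ) (j : Fin K) :
    Measure (Fin K → Fin T → Bool) :=
  Measure.pi fun k => Measure.pi fun _ : Fin T =>
    bern (if k = j then (1 + ε) / 2 else 1 / 2)

/-- The arm played in round `t` (1-indexed) by a deterministic full-information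
algorithm `alg` on the reward matrix `ω`: `alg m` maps a history of `m` observed
reward columns to the arm played in round `m + 1`. -/
def played (K T : ℕ) (alg : (m : ℕ) → (Fin m → Fin K → Bool) → Fin K)
    (ω : Fin K → Fin T → Bool) (t : ℕ) : Fin K :=
  alg (t - 1) (fun s k => if h : (s : ℕ) < T then ω k ⟨s, h⟩ else false)

open Finset

section SelectionError

variable {Ω ι : Type*} [Fintype Ω] [Fintype ι]

theorem sq_sum_weighted_selection_le (u : Ω → ℝ) (hu : ∀ ω, 0 ≤ u ω) (R : ι → Ω → ℝ) (g : Ω → ι) :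
    (∑ ω, u ω * R (g ω) ω) ^ 2 ≤ (∑ ω, u ω) * ∑ j, ∑ ω, u ω * R j ω ^ 2 := by
  rw [Finset.sum_comm]
  refine sum_sq_le_sum_mul_sum_of_sq_le_mul _ (fun ω _ => hu ω)
    (fun ω _ => sum_nonneg fun j _ => mul_nonneg (hu ω) (sq_nonneg _)) fun ω _ => ?_
  have hsel : R (g ω) ω ^ 2 ≤ ∑ j, R j ω ^ 2 :=
    single_le_sum (f := fun j => R j ω ^ 2) (fun j _ => sq_nonneg _) (mem_univ _)
  rw [← mul_sum, mul_pow, sq (u ω), mul_assoc]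
  exact mul_le_mul_of_nonneg_left (mul_le_mul_of_nonneg_left hsel (hu ω)) (hu ω)

theorem card_sub_le_sum_sum_mul_ite_ne [DecidableEq ι] (u : Ω → ℝ) (hu : ∀ ω, 0 ≤ u ω)
    (hu_sum : ∑ ω, u ω = 1) (R : ι → Ω → ℝ) (hR : ∀ j, ∑ ω, u ω * R j ω = 1)
    {s : ℝ} (hs : 0 ≤ s) (hR_sq : ∑ j, ∑ ω, u ω * R j ω ^ 2 ≤ s ^ 2) (g : Ω → ι) :
    Fintype.card ι - s ≤ ∑ j, ∑ ω, u ω * R j ω * if g ω ≠ j then 1 else 0 := by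
  have hsplit : ∑ j, ∑ ω, u ω * R j ω * (if g ω ≠ j then 1 else 0)
      = ∑ j, ∑ ω, u ω * R j ω - ∑ ω, u ω * R (g ω) ω := by
    rw [Finset.sum_comm, Finset.sum_comm (f := fun j ω => u ω * R j ω), ← sum_sub_distrib]
    refine sum_congr rfl fun ω _ => ?_
    have hne : ∀ j, (if g ω ≠ j then (1 : ℝ) else 0) = 1 - if g ω = j then 1 else 0 := by
      intro j; split_ifs <;> simp_all
    simp only [hne, mul_sub, mul_one, mul_ite, mul_zero, sum_sub_distrib, sum_ite_eq, mem_univ,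
      if_true]
  have hsel : ∑ ω, u ω * R (g ω) ω ≤ s :=
    (le_abs_self _).trans <| abs_le_of_sq_le_sq
      ((sq_sum_weighted_selection_le u hu R g).trans (by rwa [hu_sum, one_mul])) hs
  simp only [hsplit, hR, sum_const, card_univ, nsmul_eq_mul, mul_one]
  linarith

end SelectionError

instance (p : ℝ) : IsProbabilityMeasure (bern p) := by
  unfold bern
  infer_instance

instance (K T : ℕ) (ε : ℝ) (j : Fin K) : IsProbabilityMeasure (lowerP K T ε j) := by
  unfold lowerP
  infer_instance

def bernRatio (δ : ℝ) (b : Bool) : ℝ :=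
  if b then 1 + δ else 1 - δ

theorem bernRatio_nonneg {δ : ℝ} (hδ : |δ| ≤ 1) (b : Bool) : 0 ≤ bernRatio δ b := by
  obtain ⟨hδ₁, hδ₂⟩ := abs_le.mp hδ
  unfold bernRatio
  split_ifs <;> linarith

theorem bernRatio_true_add_false_div_two (δ : ℝ) :
    (bernRatio δ true + bernRatio δ false) / 2 = 1 := by
  simp only [bernRatio, if_true, Bool.false_eq_true, if_false]
  ring

theorem bernRatio_sq_true_add_false_div_two (δ : ℝ) :
    (bernRatio δ true ^ 2 + bernRatio δ false ^ 2) / 2 = 1 + δ ^ 2 := by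
  simp only [bernRatio, if_true, Bool.false_eq_true, if_false]
  ring

theorem bern_singleton {δ : ℝ} (hδ : |δ| ≤ 1) (b : Bool) :
    bern ((1 + δ) / 2) {b} = ENNReal.ofReal (bernRatio δ b / 2) := by
  obtain ⟨hδ₁, hδ₂⟩ := abs_le.mp hδ
  have hp : min (Real.toNNReal ((1 + δ) / 2)) 1 = Real.toNNReal ((1 + δ) / 2) :=
    min_eq_left (Real.toNNReal_le_one.2 (by linarith))
  rw [bern, PMF.toMeasure_apply_singleton _ _ (measurableSet_singleton b)]
  cases b
  · change ((1 - min (Real.toNNReal ((1 + δ) / 2)) 1 : NNReal) : ENNReal) = _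
    rw [hp, ENNReal.coe_sub, ENNReal.coe_one, ENNReal.ofNNReal_toNNReal,
      ← ENNReal.ofReal_one, ← ENNReal.ofReal_sub _ (by linarith)]
    congr 1
    simp only [bernRatio, Bool.false_eq_true, if_false]
    ring
  · change ((min (Real.toNNReal ((1 + δ) / 2)) 1 : NNReal) : ENNReal) = _
    simp only [hp, ENNReal.ofNNReal_toNNReal, bernRatio, if_true]

section ProductInstance

variable {ι κ : Type*} [Fintype ι] [Fintype κ]

theorem sum_prod_prod_eq_prod_prod_sum [DecidableEq ι] [DecidableEq κ] {α R : Type*} [Fintype α]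
    [CommSemiring R] (a : ι → κ → α → R) :
    ∑ ω : ι → κ → α, ∏ i, ∏ k, a i k (ω i k) = ∏ i, ∏ k, ∑ x, a i k x := by
  simp only [Fintype.prod_sum]

def likelihoodRatio (δ : ι → ℝ) (ω : ι → κ → Bool) : ℝ :=
  ∏ i, ∏ k, bernRatio (δ i) (ω i k)

theorem likelihoodRatio_nonneg {δ : ι → ℝ} (hδ : ∀ i, |δ i| ≤ 1) (ω : ι → κ → Bool) :
    0 ≤ likelihoodRatio δ ω :=
  prod_nonneg fun i _ => prod_nonneg fun _ _ => bernRatio_nonneg (hδ i) _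

theorem uniform_mul_likelihoodRatio_pow (δ : ι → ℝ) (ω : ι → κ → Bool) (n : ℕ) :
    (2⁻¹ : ℝ) ^ (Fintype.card ι * Fintype.card κ) * likelihoodRatio δ ω ^ n
      = ∏ i, ∏ k, bernRatio (δ i) (ω i k) ^ n / 2 := by
  simp only [likelihoodRatio, div_eq_mul_inv, prod_mul_distrib, prod_const, card_univ,
    ← prod_pow, ← pow_mul, mul_comm]

theorem sum_uniform_mul_likelihoodRatio_pow [DecidableEq ι] [DecidableEq κ] (δ : ι → ℝ) (n : ℕ) :
    ∑ ω : ι → κ → Bool, (2⁻¹ : ℝ) ^ (Fintype.card ι * Fintype.card κ) * likelihoodRatio δ ω ^ n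
      = ∏ i, ((bernRatio (δ i) true ^ n + bernRatio (δ i) false ^ n) / 2) ^ Fintype.card κ := by
  simp only [uniform_mul_likelihoodRatio_pow]
  refine (sum_prod_prod_eq_prod_prod_sum fun i k b => bernRatio (δ i) b ^ n / 2).trans ?_
  simp only [Fintype.sum_bool, add_div, prod_const, card_univ]

end ProductInstance

section LowerBoundInstance

variable {K T : ℕ} {ε : ℝ}

theorem abs_pi_single_le (hε : |ε| ≤ 1) (j k : Fin K) :
    |(Pi.single j ε : Fin K → ℝ) k| ≤ 1 := by
  rw [Pi.single_apply]
  split_ifs <;> simp [hε]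

theorem lowerP_singleton (hε : |ε| ≤ 1) (j : Fin K) (ω : Fin K → Fin T → Bool) :
    lowerP K T ε j {ω}
      = ENNReal.ofReal ((2⁻¹ : ℝ) ^ (K * T) * likelihoodRatio (Pi.single j ε) ω) := by
  have hrow : ∀ k,
      (Measure.pi fun _ : Fin T => bern (if k = j then (1 + ε) / 2 else 1 / 2)) {ω k}
        = ∏ t, ENNReal.ofReal (bernRatio ((Pi.single j ε : Fin K → ℝ) k) (ω k t) / 2) := by
    intro k
    have hp :
        (if k = j then (1 + ε) / 2 else 1 / 2) = (1 + (Pi.single j ε : Fin K → ℝ) k) / 2 := by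
      rw [Pi.single_apply]
      split_ifs <;> norm_num
    rw [hp, ← Set.univ_pi_singleton (ω k), Measure.pi_pi]
    exact prod_congr rfl fun t _ => bern_singleton (abs_pi_single_le hε j k) _
  have hfactor : ∀ k t, 0 ≤ bernRatio ((Pi.single j ε : Fin K → ℝ) k) (ω k t) / 2 :=
    fun k t => div_nonneg (bernRatio_nonneg (abs_pi_single_le hε j k) _) zero_le_two
  have hweight := uniform_mul_likelihoodRatio_pow (Pi.single j ε) ω 1
  simp only [Fintype.card_fin, pow_one] at hweight
  rw [lowerP, ← Set.univ_pi_singleton ω, Measure.pi_pi, prod_congr rfl fun k _ => hrow k, hweight,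
    ENNReal.ofReal_prod_of_nonneg fun k _ => prod_nonneg fun t _ => hfactor k t]
  exact prod_congr rfl fun k _ => (ENNReal.ofReal_prod_of_nonneg fun t _ => hfactor k t).symm

theorem integral_lowerP (hε : |ε| ≤ 1) (j : Fin K) (f : (Fin K → Fin T → Bool) → ℝ) :
    ∫ ω, f ω ∂lowerP K T ε j
      = ∑ ω, (2⁻¹ : ℝ) ^ (K * T) * likelihoodRatio (Pi.single j ε) ω * f ω := by
  rw [integral_fintype Integrable.of_finite]
  refine sum_congr rfl fun ω _ => ?_
  rw [measureReal_def, lowerP_singleton hε, ENNReal.toReal_ofReal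
    (mul_nonneg (by positivity) (likelihoodRatio_nonneg (abs_pi_single_le hε j) ω)), smul_eq_mul]

theorem half_card_le_sum_integral_ne (hε : |ε| ≤ 1) (hKε : 4 * (1 + ε ^ 2) ^ T ≤ K)
    (g : (Fin K → Fin T → Bool) → Fin K) :
    (K : ℝ) / 2 ≤ ∑ j, ∫ ω, (if g ω ≠ j then (1 : ℝ) else 0) ∂lowerP K T ε j := by
  have hmoment (j : Fin K) (n : ℕ) :=
    sum_uniform_mul_likelihoodRatio_pow (κ := Fin T) (Pi.single j ε) n
  simp only [Fintype.card_fin] at hmoment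
  have hmass (j : Fin K) :
      ∑ ω : Fin K → Fin T → Bool, (2⁻¹ : ℝ) ^ (K * T) * likelihoodRatio (Pi.single j ε) ω = 1 := by
    simpa only [pow_one, bernRatio_true_add_false_div_two, one_pow, prod_const_one]
      using hmoment j 1
  have hsecond (j : Fin K) :
      ∑ ω : Fin K → Fin T → Bool, (2⁻¹ : ℝ) ^ (K * T) * likelihoodRatio (Pi.single j ε) ω ^ 2
        = (1 + ε ^ 2) ^ T := by
    rw [hmoment j 2]
    simp only [bernRatio_sq_true_add_false_div_two]
    rw [prod_eq_single j (fun i _ hij => by simp [hij]) (by simp), Pi.single_eq_same]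
  have hu_sum : ∑ _ω : Fin K → Fin T → Bool, (2⁻¹ : ℝ) ^ (K * T) = 1 := by
    simp [← pow_mul, mul_comm]
  simp only [integral_lowerP hε]
  refine le_of_eq_of_le ?_ (card_sub_le_sum_sum_mul_ite_ne (fun _ => (2⁻¹ : ℝ) ^ (K * T))
    (fun _ => by positivity) hu_sum (fun j => likelihoodRatio (Pi.single j ε)) hmass
    (s := (K : ℝ) / 2) (by positivity) ?_ g)
  · rw [Fintype.card_fin]
    ring
  · simp only [hsecond, sum_const, card_univ, Fintype.card_fin, nsmul_eq_mul]
    nlinarith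

theorem exists_half_le_integral_card_ne (hK : 0 < K) (hε : |ε| ≤ 1)
    (hKε : 4 * (1 + ε ^ 2) ^ T ≤ K) (I : ℕ → (Fin K → Fin T → Bool) → Fin K) :
    ∃ j, (T : ℝ) / 2 ≤ ∫ ω, (#{t ∈ Icc 1 T | I t ω ≠ j} : ℝ) ∂lowerP K T ε j := by
  have hcount (j : Fin K) : ∫ ω, (#{t ∈ Icc 1 T | I t ω ≠ j} : ℝ) ∂lowerP K T ε j
      = ∑ t ∈ Icc 1 T, ∫ ω, (if I t ω ≠ j then (1 : ℝ) else 0) ∂lowerP K T ε j := by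
    simp only [natCast_card_filter]
    exact integral_finsetSum _ fun t _ => Integrable.of_finite
  have hsum : ∑ _j : Fin K, (T : ℝ) / 2
      ≤ ∑ j, ∫ ω, (#{t ∈ Icc 1 T | I t ω ≠ j} : ℝ) ∂lowerP K T ε j :=
    calc ∑ _j : Fin K, (T : ℝ) / 2 = ∑ _t ∈ Icc 1 T, (K : ℝ) / 2 := by
          simp only [sum_const, card_univ, Fintype.card_fin, Nat.card_Icc, nsmul_eq_mul]
          push_cast
          ring
      _ ≤ ∑ t ∈ Icc 1 T, ∑ j, ∫ ω, (if I t ω ≠ j then (1 : ℝ) else 0) ∂lowerP K T ε j :=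
          sum_le_sum fun t _ => half_card_le_sum_integral_ne hε hKε (I t)
      _ = _ := by simp only [hcount]; exact sum_comm
  obtain ⟨j, -, hj⟩ := exists_le_of_sum_le (univ_nonempty_iff.mpr ⟨⟨0, hK⟩⟩) hsum
  exact ⟨j, hj⟩

end LowerBoundInstance

theorem four_mul_one_add_sq_pow_le {K T : ℕ} {ε : ℝ} (hK : 16 ≤ K)
    (hε : ε ^ 2 * T = Real.log K / 2) : 4 * (1 + ε ^ 2) ^ T ≤ K := by
  have hK16 : (16 : ℝ) ≤ K := by exact_mod_cast hK
  have hexp : (1 + ε ^ 2) ^ T ≤ √K :=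
    calc (1 + ε ^ 2) ^ T ≤ Real.exp (ε ^ 2) ^ T :=
          pow_le_pow_left₀ (by positivity) (by linarith [Real.add_one_le_exp (ε ^ 2)]) T
      _ = √K := by
          rw [← Real.exp_nat_mul, mul_comm, hε, Real.exp_half, Real.exp_log (by positivity)]
  have hsqrt : 4 ≤ √(K : ℝ) := Real.le_sqrt_of_sq_le (by linarith)
  nlinarith [Real.mul_self_sqrt (by positivity : (0 : ℝ) ≤ K)]

/-- **Regret lower bound for full-information stochastic bandits.** There are absolute
constants `c, d, a > 0` and `K₀ ≥ 1` such that for every `K ≥ K₀` and `T ≥ 1` with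
`ε := √(c ln K / T)` satisfying `ε < d` and `ε < 1/2`, and every deterministic
full-information algorithm, there is an arm `j` whose instance `I_j` forces expected
pseudo-regret `(ε/2) · E_{P_j}[#{t ≤ T : I_t ≠ j}] ≥ a √(T ln K)`. -/
theorem full_information_regret_lower_bound :
    ∃ c > (0 : ℝ), ∃ d > (0 : ℝ), ∃ a > (0 : ℝ), ∃ K₀ : ℕ, ∃ hK₀ : 1 ≤ K₀,
      ∀ K : ℕ, ∀ hK : K₀ ≤ K, ∀ T : ℕ, 1 ≤ T →
        ∀ ε : ℝ, ε = Real.sqrt (c * Real.log K / T) → ε < d → ε < 1 / 2 →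
          ∀ alg : (m : ℕ) → (Fin m → Fin K → Bool) → Fin K,
            ∃ j : Fin K,
              a * Real.sqrt (T * Real.log K)
                ≤ ε / 2 * ∫ ω,
                    ((((Finset.Icc 1 T).filter
                        fun t => played K T alg ω t ≠ j).card : ℕ) : ℝ)
                  ∂(lowerP K T ε j) := by
  refine ⟨1 / 2, by norm_num, 1, by norm_num, 1 / 8, by norm_num, 16, by norm_num,
    fun K hK T hT ε hε_def _ hε_half alg => ?_⟩
  have hT_pos : (0 : ℝ) < T := by exact_mod_cast hT
  have hlog : 0 ≤ Real.log K := Real.log_natCast_nonneg K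
  have hε_nonneg : 0 ≤ ε := hε_def ▸ Real.sqrt_nonneg _
  have hε_sq : ε ^ 2 * T = Real.log K / 2 := by
    rw [hε_def, Real.sq_sqrt (by positivity)]
    field_simp
  obtain ⟨j, hj⟩ := exists_half_le_integral_card_ne (by omega)
    (abs_le.mpr ⟨by linarith, by linarith⟩) (four_mul_one_add_sq_pow_le hK hε_sq)
    (fun t ω => played K T alg ω t)
  refine ⟨j, le_trans ?_ (mul_le_mul_of_nonneg_left hj (by positivity))⟩
  have hroot : √(T * Real.log K) ≤ 2 * ε * T := by
    refine Real.sqrt_le_iff.mpr ⟨by positivity, ?_⟩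
    have : (2 * ε * T) ^ 2 = 2 * (T * Real.log K) := by
      rw [show (2 * ε * T) ^ 2 = 4 * (ε ^ 2 * T) * T by ring, hε_sq]
      ring
    rw [this]
    linarith [mul_nonneg hT_pos.le hlog]
  linarith
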